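/- arXiv:2208.05427 — 3 statements merged into one kernel-verified Lean document; each statement's English description precedes it below -/
import Mathlib

section
/- Let (S, 𝔪, k) be a commutative Noetherian local ring, I ⊆ S an ideal, and t ∈ 𝔪 a nonzerodivisor of S. Then k is a direct summand of the S-module I/tI if and only if (tI) : 𝔪 is not contained in 𝔪I. -/
open IsLocalRing

/-- Let `(S,𝔪,k)` be a Noetherian local ring, `I ⊆ S` an ideal and
`t ∈ 𝔪` a nonzerodivisor. Then `k` is a direct summand of `I/tI` if and only if
`(tI) : 𝔪 ⊄ 𝔪I`. -/
theorem residueField_summand_iff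
    (S : Type*) [CommRing S] [IsNoetherianRing S] [IsLocalRing S] (I : Ideal S)
    (t : S) (ht : t ∈ maximalIdeal S) (htnzd : t ∈ nonZeroDivisors S) :
    (∃ (p : (↥I ⧸ (Ideal.span {t} • ⊤ : Submodule S ↥I)) →ₗ[S] ResidueField S)
      (j : ResidueField S →ₗ[S] (↥I ⧸ (Ideal.span {t} • ⊤ : Submodule S ↥I))),
      p ∘ₗ j = LinearMap.id) ↔
    ¬ (Ideal.span {t} * I).colon (maximalIdeal S) ≤ maximalIdeal S * I := by
  set 𝔪 := maximalIdeal S with h𝔪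
  set N : Submodule S ↥I := (Ideal.span {t} • ⊤ : Submodule S ↥I) with hN
  -- membership characterization
  have key : ∀ (J : Ideal S) (y : ↥I), y ∈ (J • ⊤ : Submodule S ↥I) ↔ (y : S) ∈ J * I := by
    intro J y
    have h1 : ((J • ⊤ : Submodule S ↥I).map I.subtype) = J * I := by
      rw [Submodule.map_smul'', Submodule.map_top, Submodule.range_subtype, Ideal.smul_eq_mul]
    constructor
    · intro h; rw [← h1]; exact ⟨y, h, rfl⟩
    · intro h; rw [← h1] at h
      obtain ⟨z, hz, hzy⟩ := h
      have : z = y := Subtype.ext hzy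
      exact this ▸ hz
  have hsmul_top : (𝔪 • ⊤ : Submodule S (ResidueField S)) = ⊥ := by
    rw [Submodule.eq_bot_iff]
    intro c hc
    refine Submodule.smul_induction_on hc (fun m hm c _ => ?_)
      (fun a b ha hb => by rw [ha, hb, add_zero])
    rw [Algebra.smul_def, ResidueField.algebraMap_eq,
      (residue_eq_zero_iff m).mpr hm, zero_mul]
  constructor
  · rintro ⟨p, j, hpj⟩ hle
    obtain ⟨⟨x, hxI⟩, hx⟩ := Submodule.Quotient.mk_surjective N (j 1)
    have hone : ∀ m ∈ 𝔪, m • (1 : ResidueField S) = 0 := by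
      intro m hm
      rw [Algebra.smul_def, ResidueField.algebraMap_eq,
        (residue_eq_zero_iff m).mpr hm, zero_mul]
    have hcolon : x ∈ (Ideal.span {t} * I).colon 𝔪 := by
      rw [Submodule.mem_colon]
      intro m hm
      have h0 : m • (j 1) = 0 := by rw [← map_smul, hone m hm, map_zero]
      rw [← hx, ← Submodule.Quotient.mk_smul, Submodule.Quotient.mk_eq_zero] at h0
      have hcoe := (key _ _).mp h0
      have hms : ((m • (⟨x, hxI⟩ : ↥I) : ↥I) : S) = m * x := rfl
      rw [hms] at hcoe
      rw [smul_eq_mul, mul_comm x m]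
      exact hcoe
    have hxm : x ∈ 𝔪 * I := hle hcolon
    have hmem : (⟨x, hxI⟩ : ↥I) ∈ (𝔪 • ⊤ : Submodule S ↥I) := (key 𝔪 _).mpr hxm
    have hmem2 : j 1 ∈ (𝔪 • ⊤ : Submodule S
        (↥I ⧸ N)) := by
      rw [← hx]
      have : Submodule.map N.mkQ (𝔪 • ⊤ : Submodule S ↥I) ≤ (𝔪 • ⊤ : Submodule S (↥I ⧸ N)) := by
        rw [Submodule.map_smul'']
        exact Submodule.smul_mono le_rfl le_top
      exact this ⟨_, hmem, rfl⟩
    have hp0 : p (j 1) = 0 := by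
      have : Submodule.map p (𝔪 • ⊤ : Submodule S (↥I ⧸ N)) ≤ ⊥ := by
        rw [Submodule.map_smul'', ← hsmul_top]
        exact Submodule.smul_mono le_rfl le_top
      simpa using this ⟨_, hmem2, rfl⟩
    have h1 : p (j 1) = 1 := by
      have := LinearMap.ext_iff.mp hpj 1
      simpa using this
    rw [hp0] at h1
    exact zero_ne_one h1
  · intro h
    obtain ⟨x, hxc, hxm⟩ := SetLike.not_le_iff_exists.mp h
    have hxI : x ∈ I := by
      have h2 := Submodule.mem_colon.mp hxc t ht
      rw [smul_eq_mul] at h2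
      obtain ⟨y, hyI, hyx⟩ := Ideal.mem_span_singleton_mul.mp h2
      have : t * y = t * x := by rw [hyx, mul_comm]
      have := mul_cancel_left_mem_nonZeroDivisors htnzd |>.mp this
      exact this ▸ hyI
    set xbar : ↥I ⧸ N := Submodule.Quotient.mk ⟨x, hxI⟩ with hxbar
    -- construct j
    have hker : 𝔪 ≤ LinearMap.ker (LinearMap.toSpanSingleton S (↥I ⧸ N) xbar) := by
      intro m hm
      rw [LinearMap.mem_ker, LinearMap.toSpanSingleton_apply, hxbar,
        ← Submodule.Quotient.mk_smul, Submodule.Quotient.mk_eq_zero]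
      apply (key _ _).mpr
      have : ((m • (⟨x, hxI⟩ : ↥I) : ↥I) : S) = m * x := rfl
      rw [this, mul_comm m x]
      exact Submodule.mem_colon.mp hxc m hm
    -- xbar is nonzero mod 𝔪
    have hvne : (Submodule.Quotient.mk xbar :
        (↥I ⧸ N) ⧸ (𝔪 • ⊤ : Submodule S (↥I ⧸ N))) ≠ 0 := by
      rw [Ne, Submodule.Quotient.mk_eq_zero]
      intro hmem
      apply hxm
      have hmap : (𝔪 • ⊤ : Submodule S (↥I ⧸ N)) =
          Submodule.map N.mkQ (𝔪 • ⊤ : Submodule S ↥I) := by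
        rw [Submodule.map_smul'', Submodule.map_top, Submodule.range_mkQ]
      rw [hmap] at hmem
      obtain ⟨y, hy, hyx⟩ := hmem
      have hNle : N ≤ (𝔪 • ⊤ : Submodule S ↥I) :=
        Submodule.smul_mono (Ideal.span_le.mpr (by simpa using ht)) le_top
      have hd : (⟨x, hxI⟩ : ↥I) - y ∈ N := by
        rw [← Submodule.Quotient.eq]
        exact hyx.symm
      have hfin : (⟨x, hxI⟩ : ↥I) ∈ (𝔪 • ⊤ : Submodule S ↥I) := by
        have := Submodule.add_mem _ (hNle hd) hy
        simpa using this
      exact (key 𝔪 _).mp hfin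
    haveI : 𝔪.IsMaximal := inferInstanceAs (maximalIdeal S).IsMaximal
    letI : Field (S ⧸ 𝔪) := Ideal.Quotient.field _
    set V := (↥I ⧸ N) ⧸ (𝔪 • ⊤ : Submodule S (↥I ⧸ N)) with hV
    set v : V := Submodule.Quotient.mk xbar with hv
    set e := LinearEquiv.coord (S ⧸ 𝔪) V v hvne with he
    obtain ⟨g, hg⟩ := LinearMap.exists_extend (e : ((S ⧸ 𝔪) ∙ v) →ₗ[S ⧸ 𝔪] (S ⧸ 𝔪))
    have hgv : g v = 1 := by
      have h1 := LinearMap.congr_fun hg ⟨v, Submodule.mem_span_singleton_self v⟩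
      simp only [LinearMap.comp_apply, Submodule.subtype_apply, LinearEquiv.coe_coe] at h1
      rw [show v = ((⟨v, Submodule.mem_span_singleton_self v⟩ : (S ⧸ 𝔪) ∙ v) : V) from rfl, h1]
      exact LinearEquiv.coord_self _ _ _ _
    refine ⟨(g.restrictScalars S).comp (Submodule.mkQ _),
      Submodule.liftQ 𝔪 (LinearMap.toSpanSingleton S (↥I ⧸ N) xbar) hker, ?_⟩
    refine LinearMap.ext fun c => ?_
    obtain ⟨s, rfl⟩ := Ideal.Quotient.mk_surjective c
    have hj : (Submodule.liftQ 𝔪 (LinearMap.toSpanSingleton S (↥I ⧸ N) xbar) hker)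
        (Ideal.Quotient.mk 𝔪 s) = s • xbar := by
      rw [show (Ideal.Quotient.mk 𝔪 s : S ⧸ 𝔪) = Submodule.Quotient.mk s from rfl,
        Submodule.liftQ_apply, LinearMap.toSpanSingleton_apply]
    show (g.restrictScalars S) ((Submodule.mkQ _)
      ((Submodule.liftQ 𝔪 (LinearMap.toSpanSingleton S (↥I ⧸ N) xbar) hker)
        (Ideal.Quotient.mk 𝔪 s))) = Ideal.Quotient.mk 𝔪 s
    rw [hj, map_smul, map_smul, LinearMap.restrictScalars_apply]
    rw [show ((Submodule.mkQ (𝔪 • ⊤ : Submodule S (↥I ⧸ N))) xbar) = v from rfl, hgv]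
    rw [show (s • (1 : S ⧸ 𝔪)) = Ideal.Quotient.mk 𝔪 s * 1 from rfl, mul_one]
end

section
/- Let k be a field, S = k[x₁,…,xₙ] a polynomial ring with n ≥ 1 variables and standard grading, and 𝔪 = (x₁,…,xₙ) the irrelevant maximal ideal. Let I ⊆ 𝔪² be a homogeneous ideal, and suppose there is a nonzero homogeneous element s of degree g with s𝔪 ⊆ I (i.e. s ∈ I : 𝔪), while every nonzero homogeneous element of I has degree strictly greater than g (the minimal generating degree of I : 𝔪 is less than that of I). Then BI_S(I) = (I𝔪) : (I : 𝔪) = 𝔪², and hence Burch_S(I) = dim_k(𝔪/𝔪²) = n. -/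
open MvPolynomial Pointwise

section Aux
variable {k : Type*} [Field k] {n : ℕ}

local notation "SS" => MvPolynomial (Fin n) k
local notation "mm" => (Ideal.span (Set.range (X : Fin n → MvPolynomial (Fin n) k)))

lemma aux_degree_add (u v : Fin n →₀ ℕ) :
    (u + v).degree = u.degree + v.degree := by
  simp only [Finsupp.degree_eq_weight_one, map_add]

lemma aux_degree_single (i : Fin n) (m : ℕ) : (Finsupp.single i m).degree = m := by
  classical
  rcases eq_or_ne m 0 with rfl | hm
  · simp [Finsupp.degree]
  · simp [Finsupp.degree_apply, Finsupp.support_single_ne_zero _ hm]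

lemma aux_mem_m_iff {p : SS} : p ∈ mm ↔ ∀ u ∈ p.support, u ≠ 0 := by
  rw [← Set.image_univ, mem_ideal_span_X_image]
  constructor
  · rintro h u hu rfl
    obtain ⟨i, -, hi⟩ := h 0 hu
    simp at hi
  · intro h u hu
    have h0 := h u hu
    by_contra hc
    push_neg at hc
    apply h0
    ext i
    simpa using (hc i (Set.mem_univ i))

lemma aux_mem_m2_iff {p : SS} : p ∈ mm ^ 2 ↔ ∀ u ∈ p.support, 2 ≤ u.degree := by
  classical
  have hset : (Set.range (X : Fin n → SS)) * (Set.range (X : Fin n → SS)) =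
      (fun s => monomial s (1 : k)) ''
        {w : Fin n →₀ ℕ | ∃ i j : Fin n, w = Finsupp.single i 1 + Finsupp.single j 1} := by
    ext q
    rw [Set.mem_mul]
    constructor
    · rintro ⟨x, ⟨i, rfl⟩, y, ⟨j, rfl⟩, rfl⟩
      exact ⟨Finsupp.single i 1 + Finsupp.single j 1, ⟨i, j, rfl⟩, by
        simp [X, monomial_mul]⟩
    · rintro ⟨w, ⟨i, j, rfl⟩, rfl⟩
      exact ⟨X i, ⟨i, rfl⟩, X j, ⟨j, rfl⟩, by simp [X, monomial_mul]⟩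
  have h2 : mm ^ 2 = Ideal.span ((fun s => monomial s (1 : k)) ''
      {w : Fin n →₀ ℕ | ∃ i j : Fin n, w = Finsupp.single i 1 + Finsupp.single j 1}) := by
    rw [pow_two, Ideal.span_mul_span', hset]
  rw [h2, mem_ideal_span_monomial_image]
  constructor
  · intro h u hu
    obtain ⟨w, ⟨i, j, rfl⟩, hle⟩ := h u hu
    obtain ⟨c, rfl⟩ := le_iff_exists_add.mp hle
    rw [aux_degree_add, aux_degree_add, aux_degree_single, aux_degree_single]
    omega
  · intro h u hu
    have hdeg := h u hu
    have hu0 : u ≠ 0 := by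
      rintro rfl
      simp [map_zero] at hdeg
    obtain ⟨i, hi⟩ : ∃ i, u i ≠ 0 := by
      by_contra hc
      push_neg at hc
      exact hu0 (Finsupp.ext fun i => hc i)
    by_cases h2i : 2 ≤ u i
    · refine ⟨Finsupp.single i 1 + Finsupp.single i 1, ⟨i, i, rfl⟩, ?_⟩
      intro a
      rcases eq_or_ne a i with rfl | ha
      · simp [Finsupp.single_apply]; omega
      · simp [Finsupp.single_apply, ha.symm]
    · obtain ⟨j, hj, hji⟩ : ∃ j, u j ≠ 0 ∧ j ≠ i := by
        by_contra hc
        push_neg at hc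
        have hu : u = Finsupp.single i (u i) := by
          ext a
          rcases eq_or_ne a i with rfl | ha
          · simp
          · simp only [Finsupp.single_apply, if_neg (Ne.symm ha)]
            by_contra h
            exact ha (hc a h)
        rw [hu, aux_degree_single] at hdeg
        omega
      refine ⟨Finsupp.single i 1 + Finsupp.single j 1, ⟨i, j, rfl⟩, ?_⟩
      intro a
      rcases eq_or_ne a i with rfl | hai
      · simp [Finsupp.single_apply, hji]; omega
      · rcases eq_or_ne a j with rfl | haj
        · simp [Finsupp.single_apply, hai.symm, (Ne.symm hji)]
          omega
        · simp [Finsupp.single_apply, hai.symm, haj.symm]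

lemma aux_low_mul {a b : ℕ} {p q : SS}
    (hp : ∀ u : Fin n →₀ ℕ, u.degree < a → coeff u p = 0)
    (hq : ∀ u : Fin n →₀ ℕ, u.degree < b → coeff u q = 0) :
    ∀ u : Fin n →₀ ℕ, u.degree < a + b → coeff u (p * q) = 0 := by
  intro u hu
  rw [coeff_mul]
  apply Finset.sum_eq_zero
  rintro ⟨v, w⟩ hvw
  rw [Finset.HasAntidiagonal.mem_antidiagonal] at hvw
  have hdeg : v.degree + w.degree = u.degree := by rw [← aux_degree_add, hvw]
  rcases lt_or_ge v.degree a with hv | hv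
  · simp [hp v hv]
  · have : w.degree < b := by omega
    simp [hq w this]

end Aux

section Part1
variable {k : Type*} [Field k] {n : ℕ}
local notation "SS" => MvPolynomial (Fin n) k
local notation "mm" => (Ideal.span (Set.range (X : Fin n → MvPolynomial (Fin n) k)))

lemma aux_part1 (I : Ideal SS)
    (hhom : ∀ p ∈ I, ∀ i : ℕ, homogeneousComponent i p ∈ I)
    (g : ℕ) (s : SS) (hs0 : s ≠ 0) (hsg : s.IsHomogeneous g)
    (hsoc : ∀ m ∈ mm, s * m ∈ I)
    (hdeg : ∀ p ∈ I, p ≠ 0 → ∀ d : ℕ, p.IsHomogeneous d → g < d) :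
    (I * mm).colon (I.colon mm) = mm ^ 2 := by
  apply le_antisymm
  · -- hard direction
    intro f hf
    have hsI : s ∈ I.colon mm :=
      Submodule.mem_colon.mpr fun m hm => by simpa [smul_eq_mul] using hsoc m hm
    have hfs : f * s ∈ I * mm := by
      simpa [smul_eq_mul] using Submodule.mem_colon.mp hf s hsI
    have hIlow : ∀ p ∈ I, ∀ u : Fin n →₀ ℕ, u.degree < g + 1 → coeff u p = 0 := by
      intro p hp u hu
      have h2 := hhom p hp u.degree
      by_cases hz : homogeneousComponent u.degree p = 0
      · have h3 := coeff_homogeneousComponent (σ := Fin n) (R := k) u.degree p u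
        rw [hz, if_pos rfl] at h3
        simpa using h3.symm
      · exact absurd (hdeg _ h2 hz u.degree (homogeneousComponent_isHomogeneous _ _))
          (by omega)
    have hMlow : ∀ m ∈ mm, ∀ u : Fin n →₀ ℕ, u.degree < 1 → coeff u m = 0 := by
      intro m hm u hu
      by_contra hc
      exact (aux_mem_m_iff.mp hm u (mem_support_iff.mpr hc))
        ((Finsupp.degree_eq_zero_iff u).mp (by omega))
    have hIM : ∀ q ∈ I * mm, ∀ u : Fin n →₀ ℕ, u.degree < g + 2 → coeff u q = 0 := by
      intro q hq
      refine Submodule.mul_induction_on hq ?_ ?_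
      · intro p hp m hm u hu
        exact aux_low_mul (a := g + 1) (b := 1) (hIlow p hp) (hMlow m hm) u (by omega)
      · intro x y hx hy u hu
        rw [coeff_add, hx u hu, hy u hu, add_zero]
    set c := homogeneousComponent 0 f with hc_def
    set l := homogeneousComponent 1 f with hl_def
    set r := f - c - l with hr_def
    have hr2 : ∀ u : Fin n →₀ ℕ, u.degree < 2 → coeff u r = 0 := by
      intro u hu
      have h0 := coeff_homogeneousComponent (σ := Fin n) (R := k) 0 f u
      have h1 := coeff_homogeneousComponent (σ := Fin n) (R := k) 1 f u
      rw [hr_def, coeff_sub, coeff_sub, h0, h1]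
      by_cases hd0 : u.degree = 0
      · rw [if_pos hd0, if_neg (by omega)]; ring
      · rw [if_neg hd0, if_pos (by omega)]; ring
    have hslow : ∀ u : Fin n →₀ ℕ, u.degree < g → coeff u s = 0 := by
      intro u hu
      exact hsg.coeff_eq_zero (by omega)
    have hrs : ∀ u : Fin n →₀ ℕ, u.degree < g + 2 → coeff u (r * s) = 0 := by
      have := aux_low_mul (a := 2) (b := g) hr2 hslow
      intro u hu
      exact this u (by omega)
    have hcls : ∀ u : Fin n →₀ ℕ, u.degree < g + 2 → coeff u ((c + l) * s) = 0 := by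
      intro u hu
      have hfr : (c + l) * s = f * s - r * s := by rw [hr_def]; ring
      rw [hfr, coeff_sub, hIM _ hfs u hu, hrs u hu, sub_zero]
    have hchom : (c * s).IsHomogeneous (0 + g) :=
      (homogeneousComponent_isHomogeneous 0 f).mul hsg
    have hlhom : (l * s).IsHomogeneous (1 + g) :=
      (homogeneousComponent_isHomogeneous 1 f).mul hsg
    have hcs : c * s = 0 := by
      ext u
      rw [coeff_zero]
      by_cases hud : u.degree = g
      · have h1 := hcls u (by omega)
        have h2 : coeff u (l * s) = 0 := hlhom.coeff_eq_zero (by omega)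
        rw [add_mul, coeff_add, h2, add_zero] at h1
        exact h1
      · exact hchom.coeff_eq_zero (by omega)
    have hls : l * s = 0 := by
      ext u
      rw [coeff_zero]
      by_cases hud : u.degree = g + 1
      · have h1 := hcls u (by omega)
        have h2 : coeff u (c * s) = 0 := hchom.coeff_eq_zero (by omega)
        rw [add_mul, coeff_add, h2, zero_add] at h1
        exact h1
      · exact hlhom.coeff_eq_zero (by omega)
    have hc0 : c = 0 := by
      rcases mul_eq_zero.mp hcs with h | h
      · exact h
      · exact absurd h hs0
    have hl0 : l = 0 := by
      rcases mul_eq_zero.mp hls with h | h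
      · exact h
      · exact absurd h hs0
    have hfr : r = f := by rw [hr_def, hc0, hl0, sub_zero, sub_zero]
    rw [aux_mem_m2_iff]
    intro u hu
    by_contra hlt
    push_neg at hlt
    exact (mem_support_iff.mp hu) (by rw [← hfr]; exact hr2 u hlt)
  · -- easy direction
    have h1 : mm * (I.colon mm) ≤ I := by
      rw [Ideal.mul_le]
      intro m hm y hy
      rw [mul_comm]
      simpa [smul_eq_mul] using Submodule.mem_colon.mp hy m hm
    intro f hf
    rw [Submodule.mem_colon]
    intro y hy
    have h2 : f * y ∈ mm ^ 2 * (I.colon mm) := Ideal.mul_mem_mul hf hy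
    have h3 : mm ^ 2 * (I.colon mm) ≤ I * mm := by
      rw [pow_two, mul_assoc]
      calc mm * (mm * (I.colon mm)) ≤ mm * I := Ideal.mul_mono_right h1
        _ = I * mm := mul_comm _ _
    simpa [smul_eq_mul] using h3 h2

end Part1

section Part2
variable {k : Type*} [Field k] {n : ℕ}
local notation "SS" => MvPolynomial (Fin n) k
local notation "mm" => (Ideal.span (Set.range (X : Fin n → MvPolynomial (Fin n) k)))
noncomputable abbrev auxNN (k : Type*) [Field k] (n : ℕ) :
    Submodule (MvPolynomial (Fin n) k)
      ↥(Ideal.span (Set.range (X : Fin n → MvPolynomial (Fin n) k))) :=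
  Submodule.comap
    (Ideal.span (Set.range (X : Fin n → MvPolynomial (Fin n) k))).subtype
    ((Ideal.span (Set.range (X : Fin n → MvPolynomial (Fin n) k))) ^ 2)

lemma aux_smul_zero (x : SS) (hx : x ∈ mm) (q : (↥mm ⧸ auxNN k n)) : x • q = 0 := by
  obtain ⟨p, rfl⟩ := Submodule.Quotient.mk_surjective _ q
  rw [← Submodule.Quotient.mk_smul, Submodule.Quotient.mk_eq_zero]
  show (x • p : ↥mm).1 ∈ mm ^ 2
  have : (x • p : ↥mm).1 = x * p.1 := rfl
  rw [this, pow_two]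
  exact Ideal.mul_mem_mul hx p.2

lemma aux_C_smul (c : k) (q : (↥mm ⧸ auxNN k n)) : (C c : SS) • q = c • q := by
  obtain ⟨p, rfl⟩ := Submodule.Quotient.mk_surjective _ q
  rw [← Submodule.Quotient.mk_smul, ← Submodule.Quotient.mk_smul]
  congr 1
  apply Subtype.ext
  show (C c : SS) * p.1 = c • p.1
  rw [smul_eq_C_mul]

lemma aux_smul_eq (x : SS) (q : (↥mm ⧸ auxNN k n)) : x • q = (constantCoeff x) • q := by
  have hx : x - C (constantCoeff x) ∈ mm := by
    rw [aux_mem_m_iff]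
    intro u hu
    rintro rfl
    apply mem_support_iff.mp hu
    simp [coeff_sub, constantCoeff_eq]
  have hsplit : x = C (constantCoeff x) + (x - C (constantCoeff x)) := by ring
  calc x • q = (C (constantCoeff x) + (x - C (constantCoeff x))) • q := by rw [← hsplit]
    _ = (C (constantCoeff x) : SS) • q + (x - C (constantCoeff x)) • q := add_smul _ _ _
    _ = (C (constantCoeff x) : SS) • q := by rw [aux_smul_zero _ hx, add_zero]
    _ = (constantCoeff x) • q := aux_C_smul _ _

noncomputable def auxToS (W : Submodule k (↥mm ⧸ auxNN k n)) : Submodule (MvPolynomial (Fin n) k) (↥mm ⧸ auxNN k n) where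
  carrier := W
  add_mem' h1 h2 := W.add_mem h1 h2
  zero_mem' := W.zero_mem
  smul_mem' x q hq := by
    show x • q ∈ W
    rw [aux_smul_eq]
    exact W.smul_mem _ hq

noncomputable def auxIso : Submodule (MvPolynomial (Fin n) k) (↥mm ⧸ auxNN k n) ≃o Submodule k (↥mm ⧸ auxNN k n) where
  toFun W := W.restrictScalars k
  invFun := auxToS
  left_inv W := SetLike.coe_injective rfl
  right_inv W := SetLike.coe_injective rfl
  map_rel_iff' := Iff.rfl

end Part2

section Part3
variable {k : Type*} [Field k] {n : ℕ}
local notation "SS" => MvPolynomial (Fin n) k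
local notation "mm" => (Ideal.span (Set.range (X : Fin n → MvPolynomial (Fin n) k)))

lemma aux_m2_coeff {p : SS} (hp : p ∈ mm ^ 2) {u : Fin n →₀ ℕ} (hu : u.degree < 2) :
    coeff u p = 0 := by
  by_contra hc
  have := aux_mem_m2_iff.mp hp u (mem_support_iff.mpr hc)
  omega

lemma aux_degree_one {u : Fin n →₀ ℕ} (hu : u.degree = 1) : ∃ i, u = Finsupp.single i 1 := by
  have hu0 : u ≠ 0 := by
    intro h
    rw [h, map_zero] at hu
    omega
  obtain ⟨i, hi⟩ : ∃ i, u i ≠ 0 := by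
    by_contra hc
    push_neg at hc
    exact hu0 (Finsupp.ext fun i => hc i)
  refine ⟨i, ?_⟩
  have hle := Finsupp.le_degree i u
  have hui : u i = 1 := by omega
  ext a
  rcases eq_or_ne a i with rfl | ha
  · simp [hui]
  · simp only [Finsupp.single_apply, if_neg (Ne.symm ha)]
    by_contra hua
    have hsub : {i, a} ⊆ u.support := by
      intro b hb
      simp only [Finset.mem_insert, Finset.mem_singleton] at hb
      rcases hb with rfl | rfl <;> simp [Finsupp.mem_support_iff, hi, hua]
    have h2 : u i + u a ≤ u.degree := by
      have := Finset.sum_le_sum_of_subset hsub (f := fun b => u b)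
      simpa [Finsupp.degree_apply, Finset.sum_insert, Finset.sum_pair (Ne.symm ha)] using this
    omega

/-- The linear coefficients map. -/
noncomputable def auxChi : (↥mm ⧸ auxNN k n) →ₗ[k] (Fin n → k) where
  toFun q := Quotient.liftOn' q (fun a i => coeff (Finsupp.single i 1) (a : SS)) (by
    intro a b hab
    have h1 : a - b ∈ auxNN k n := (Submodule.quotientRel_def _).mp hab
    have hmem : ((a : SS) - (b : SS)) ∈ mm ^ 2 := h1
    funext i
    have h0 : coeff (Finsupp.single i 1) ((a : SS) - (b : SS)) = 0 :=
      aux_m2_coeff hmem (by rw [aux_degree_single]; omega)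
    rw [coeff_sub, sub_eq_zero] at h0
    exact h0)
  map_add' q1 q2 := by
    refine Quotient.inductionOn₂' q1 q2 fun a b => ?_
    funext i
    show coeff _ ((a + b : ↥mm) : SS) = coeff _ (a : SS) + coeff _ (b : SS)
    rw [Submodule.coe_add, coeff_add]
  map_smul' c q := by
    refine Quotient.inductionOn' q fun a => ?_
    funext i
    show coeff _ ((c • a : ↥mm) : SS) = c • coeff _ (a : SS)
    rw [Submodule.coe_smul_of_tower, coeff_smul]

lemma auxChi_bijective : Function.Bijective (auxChi (k := k) (n := n)) := by
  constructor
  · rw [← LinearMap.ker_eq_bot (M := (↥mm ⧸ auxNN k n))]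
    rw [Submodule.eq_bot_iff]
    intro q hq
    obtain ⟨a, rfl⟩ := Submodule.Quotient.mk_surjective _ q
    rw [LinearMap.mem_ker] at hq
    rw [Submodule.Quotient.mk_eq_zero]
    show (a : SS) ∈ mm ^ 2
    rw [aux_mem_m2_iff]
    intro u hu
    by_contra hlt
    push_neg at hlt
    have hu0 : u ≠ 0 := aux_mem_m_iff.mp a.2 u hu
    have hdeg1 : u.degree = 1 := by
      rcases (by omega : u.degree = 0 ∨ u.degree = 1) with h | h
      · exact absurd ((Finsupp.degree_eq_zero_iff u).mp h) hu0
      · exact h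
    obtain ⟨i, rfl⟩ := aux_degree_one hdeg1
    have : coeff (Finsupp.single i 1) (a : SS) = 0 := congrFun hq i
    exact mem_support_iff.mp hu this
  · intro v
    have hp : (∑ i : Fin n, C (v i) * X i) ∈ mm := by
      apply Ideal.sum_mem
      intro i _
      exact Ideal.mul_mem_left _ _ (Ideal.subset_span ⟨i, rfl⟩)
    refine ⟨Submodule.Quotient.mk ⟨∑ i : Fin n, C (v i) * X i, hp⟩, ?_⟩
    funext j
    show coeff (Finsupp.single j 1) (∑ i : Fin n, C (v i) * X i) = v j
    rw [coeff_sum]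
    rw [Finset.sum_eq_single j]
    · simp [coeff_C_mul, coeff_X]
    · intro i _ hij
      rw [coeff_C_mul, coeff_X', if_neg (by
        intro h
        exact hij (by
          have := Finsupp.single_left_injective (α := Fin n) one_ne_zero h
          exact this)), mul_zero]
    · intro h
      exact absurd (Finset.mem_univ j) h

end Part3

section Part4
variable (k : Type*) [Field k] (n : ℕ)

/-- The flag submodule. -/
def auxFlag (i : ℕ) : Submodule k (Fin n → k) where
  carrier := {v | ∀ j : Fin n, i ≤ (j : ℕ) → v j = 0}
  add_mem' {v w} hv hw j hj := by rw [Pi.add_apply, hv j hj, hw j hj, add_zero]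
  zero_mem' j _ := rfl
  smul_mem' c v hv j hj := by rw [Pi.smul_apply, hv j hj, smul_zero]

lemma auxFlag_lt {i : ℕ} (hi : i < n) : auxFlag k n i < auxFlag k n (i + 1) := by
  rw [SetLike.lt_iff_le_and_exists]
  constructor
  · intro v hv j hj
    exact hv j (by omega)
  · refine ⟨Pi.single (⟨i, hi⟩ : Fin n) 1, ?_, ?_⟩
    · intro j hj
      apply Pi.single_eq_of_ne
      intro h
      rw [h] at hj
      simp at hj
    · intro hmem
      have := hmem ⟨i, hi⟩ (le_refl _)
      rw [Pi.single_eq_same] at this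
      exact one_ne_zero this

noncomputable def auxChain : LTSeries (Submodule k (Fin n → k)) where
  length := n
  toFun i := auxFlag k n i
  step i := auxFlag_lt k n i.2

lemma aux_krullDim_pi :
    Order.krullDim (Submodule k (Fin n → k)) = (n : WithBot ℕ∞) := by
  apply le_antisymm
  · rw [Order.krullDim_eq_iSup_length]
    refine le_trans (le_of_eq (by norm_cast)) (WithBot.coe_le_coe.mpr (iSup_le fun p => ?_))
    refine le_trans ?_ (le_of_eq (by norm_cast : ((n : ℕ∞)) = (n:ℕ∞)))
    rw [Nat.cast_le]
    -- any strict chain has length ≤ n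
    have hsm : StrictMono fun i : Fin (p.length + 1) =>
        (⟨Module.finrank k (p i), by
          have h1 := Submodule.finrank_le (p i)
          have h2 : Module.finrank k (Fin n → k) = n := Module.finrank_fin_fun k
          omega⟩ : Fin (n + 1)) := by
      intro i j hij
      have := Submodule.finrank_lt_finrank_of_lt (p.strictMono hij)
      exact this
    have hcard := Fintype.card_le_of_injective _ hsm.injective
    simpa using hcard
  · have h := Order.LTSeries.length_le_krullDim (auxChain k n)
    simpa [auxChain] using h

end Part4

section Part5
variable {k : Type*} [Field k] {n : ℕ}
local notation "SS" => MvPolynomial (Fin n) k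
local notation "mm" => (Ideal.span (Set.range (X : Fin n → MvPolynomial (Fin n) k)))

set_option maxHeartbeats 1000000 in
set_option synthInstance.maxHeartbeats 1000000 in
lemma aux_krullDim_quot :
    Order.krullDim (Submodule (MvPolynomial (Fin n) k) (↥mm ⧸ auxNN k n)) =
      (n : WithBot ℕ∞) := by
  refine Eq.trans (Order.krullDim_eq_of_orderIso auxIso) ?_
  refine Eq.trans (Order.krullDim_eq_of_orderIso
    (Submodule.orderIsoMapComap (LinearEquiv.ofBijective auxChi auxChi_bijective))) ?_
  exact aux_krullDim_pi k n

end Part5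

/-- Let `S = k[x₁,…,xₙ]` (`n ≥ 1`) with irrelevant maximal ideal `𝔪`,
and let `I ⊆ 𝔪²` be a homogeneous ideal. If there is a nonzero homogeneous `s` of degree
`g` with `s𝔪 ⊆ I`, while every nonzero homogeneous element of `I` has degree `> g`, then
`BI_S(I) = (I𝔪) : (I : 𝔪) = 𝔪²` and `Burch_S(I) = dim_k(𝔪/𝔪²) = n`. -/
theorem burch_of_low_socle_degree (k : Type*) [Field k] (n : ℕ) (hn : 1 ≤ n)
    (I : Ideal (MvPolynomial (Fin n) k))
    (hI : I ≤ (Ideal.span (Set.range (X : Fin n → MvPolynomial (Fin n) k))) ^ 2)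
    (hhom : ∀ p ∈ I, ∀ i : ℕ, homogeneousComponent i p ∈ I)
    (g : ℕ) (s : MvPolynomial (Fin n) k) (hs0 : s ≠ 0) (hsg : s.IsHomogeneous g)
    (hsoc : ∀ m ∈ Ideal.span (Set.range (X : Fin n → MvPolynomial (Fin n) k)), s * m ∈ I)
    (hdeg : ∀ p ∈ I, p ≠ 0 → ∀ d : ℕ, p.IsHomogeneous d → g < d) :
    (I * Ideal.span (Set.range (X : Fin n → MvPolynomial (Fin n) k))).colon
        (I.colon (Ideal.span (Set.range (X : Fin n → MvPolynomial (Fin n) k)))) =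
      (Ideal.span (Set.range (X : Fin n → MvPolynomial (Fin n) k))) ^ 2 ∧
    Order.krullDim
      (Submodule (MvPolynomial (Fin n) k)
        (↥(Ideal.span (Set.range (X : Fin n → MvPolynomial (Fin n) k))) ⧸
          Submodule.comap
            (Ideal.span (Set.range (X : Fin n → MvPolynomial (Fin n) k))).subtype
            ((I * Ideal.span (Set.range (X : Fin n → MvPolynomial (Fin n) k))).colon
              (I.colon (Ideal.span (Set.range (X : Fin n → MvPolynomial (Fin n) k))))))) =
      (n : WithBot ℕ∞) := by
  have h1 := aux_part1 I hhom g s hs0 hsg hsoc hdeg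
  refine ⟨h1, ?_⟩
  rw [h1]
  exact aux_krullDim_quot
end

section
/- Let (S, 𝔪, k) be a commutative Noetherian local ring, I ⊆ S an ideal, t ∈ 𝔪 a nonzerodivisor of S, and suppose there exists u ∈ 𝔪 whose image in S/tS is a nonzerodivisor. Then (tI) : 𝔪 = t(I : 𝔪). -/
open IsLocalRing

/-- Let `(S,𝔪,k)` be a Noetherian local ring, `I ⊆ S` an ideal and
`t ∈ 𝔪` a nonzerodivisor such that some `u ∈ 𝔪` maps to a nonzerodivisor of `S/tS`.
Then `(tI) : 𝔪 = t(I : 𝔪)`. -/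
theorem colon_smul_eq
    (S : Type*) [CommRing S] [IsNoetherianRing S] [IsLocalRing S] (I : Ideal S)
    (t : S) (ht : t ∈ maximalIdeal S) (htnzd : t ∈ nonZeroDivisors S)
    (u : S) (hu : u ∈ maximalIdeal S)
    (hunzd : Ideal.Quotient.mk (Ideal.span {t}) u ∈ nonZeroDivisors (S ⧸ Ideal.span {t})) :
    (Ideal.span {t} * I).colon (maximalIdeal S) =
      Ideal.span {t} * (I.colon (maximalIdeal S)) := by
  apply le_antisymm
  · intro x hx
    -- first: x ∈ span {t}
    have hxu : x * u ∈ Ideal.span {t} := by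
      have h1 : x • u ∈ Ideal.span {t} * I := Submodule.mem_colon.mp hx u hu
      have h2 : Ideal.span {t} * I ≤ Ideal.span {t} := Ideal.mul_le_left
      exact h2 h1
    have hx0 : (Ideal.Quotient.mk (Ideal.span {t})) x = 0 := by
      apply (mem_nonZeroDivisors_iff.mp hunzd).2
      rw [← map_mul, Ideal.Quotient.eq_zero_iff_mem]
      exact hxu
    rw [Ideal.Quotient.eq_zero_iff_mem, Ideal.mem_span_singleton'] at hx0
    obtain ⟨y, hy⟩ := hx0
    have hyc : y ∈ I.colon (maximalIdeal S) := by
      rw [Submodule.mem_colon]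
      intro m hm
      have hxm : x * m ∈ Ideal.span {t} * I := by
        simpa [smul_eq_mul, mul_comm] using Submodule.mem_colon.mp hx m hm
      obtain ⟨z, hz, hz'⟩ := Ideal.mem_span_singleton_mul.mp hxm
      have heq : t * (m * y - z) = 0 := by
        rw [mul_sub, hz', ← hy]; ring
      have hmy : m * y - z = 0 := (mem_nonZeroDivisors_iff.mp htnzd).2 _ (by rw [mul_comm]; exact heq)
      have hmy' : m * y = z := by linear_combination hmy
      show y • m ∈ I
      rw [smul_eq_mul, mul_comm, hmy']
      exact hz
    rw [← hy, mul_comm y t]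
    exact Ideal.mul_mem_mul (Ideal.mem_span_singleton_self t) hyc
  · rw [Ideal.mul_le]
    intro r hr s hs
    rw [Submodule.mem_colon]
    intro m hm
    have : s * m ∈ I := by simpa [smul_eq_mul, mul_comm] using Submodule.mem_colon.mp hs m hm
    have := Ideal.mul_mem_mul hr this
    simpa [smul_eq_mul, mul_comm, mul_assoc, mul_left_comm] using this
end
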